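/- Let f : ℝⁿ × ℝᵐ → ℝⁿ and φ : ℝⁿ × ℝᵐ → ℝᵏ be continuously differentiable, and let (q,u,p,λ) : [t₀,t₁] → ℝⁿ × ℝᵐ × ℝⁿ × ℝᵏ be continuously differentiable curves. Define the action S(q,u,p,λ) = ∫_{t₀}^{t₁} ( ⟨p(t), q̇(t) − f(q(t),u(t))⟩ − ⟨λ(t), φ(q(t),u(t))⟩ ) dt. Then the Gateaux derivative d/dε|_{ε=0} S(q+ε·δq, u+ε·δu, p+ε·δp, λ+ε·δλ) vanishes for all continuously differentiable variations (δq, δu, δp, δλ) with δq(t₀) = 0 and δq(t₁) = 0 if and only if for all t ∈ [t₀,t₁]: q̇ = f(q,u), ṗ = −D_qf(q,u)ᵀ p − D_qφ(q,u)ᵀ λ, 0 = φ(q,u), and 0 = D_uf(q,u)ᵀ p + D_uφ(q,u)ᵀ λ. -/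

import Mathlib

/-!
Write the integrand as a C¹ Lagrangian `L(x, v, p, λ) = ⟪p, v - f x⟫ - ⟪λ, φ x⟫` evaluated along
`z = ((q, u), q̇, p, λ)`. Differentiating under the integral sign, the Gateaux derivative of the
action in the direction `δz` is `∫ DL(z) δz`. Transposing the partial Jacobians and integrating
`⟪p, δq̇⟫` by parts (this is where `δq(t₀) = δq(t₁) = 0` enters) turns it into
`∫ ⟪δp, q̇ - f⟫ - ⟪δλ, φ⟫ - ⟪δq, ṗ + D_qfᵀ p + D_qφᵀ λ⟫ - ⟪δu, D_ufᵀ p + D_uφᵀ λ⟫`.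
Varying one component at a time, the fundamental lemma of the calculus of variations shows
that this vanishes for all variations iff each of the four residuals vanishes on `[t₀, t₁]`.
-/

open scoped RealInnerProductSpace

noncomputable section

abbrev Euc (n : ℕ) : Type := EuclideanSpace ℝ (Fin n)

/-- Partial Jacobian `D_qF(q,u)` with respect to the first argument. -/
noncomputable def Dq {n m k : ℕ} (F : Euc n × Euc m → Euc k) (q : Euc n) (u : Euc m) :
    Euc n →L[ℝ] Euc k :=
  fderiv ℝ (fun q' => F (q', u)) q

/-- Partial Jacobian `D_uF(q,u)` with respect to the second argument. -/
noncomputable def Du {n m k : ℕ} (F : Euc n × Euc m → Euc k) (q : Euc n) (u : Euc m) :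
    Euc m →L[ℝ] Euc k :=
  fderiv ℝ (fun u' => F (q, u')) u

/-- `D_qF(q,u)ᵀ`, the transpose (adjoint) of the partial Jacobian in `q`. -/
noncomputable def DqT {n m k : ℕ} (F : Euc n × Euc m → Euc k) (q : Euc n) (u : Euc m) :
    Euc k →L[ℝ] Euc n :=
  ContinuousLinearMap.adjoint (Dq F q u)

/-- `D_uF(q,u)ᵀ`, the transpose (adjoint) of the partial Jacobian in `u`. -/
noncomputable def DuT {n m k : ℕ} (F : Euc n × Euc m → Euc k) (q : Euc n) (u : Euc m) :
    Euc k →L[ℝ] Euc m :=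
  ContinuousLinearMap.adjoint (Du F q u)

/-- Partial gradient `∇_qL(q,u)`. -/
noncomputable def gradQ {n m : ℕ} (L : Euc n × Euc m → ℝ) (q : Euc n) (u : Euc m) : Euc n :=
  gradient (fun q' => L (q', u)) q

/-- Partial gradient `∇_uL(q,u)`. -/
noncomputable def gradU {n m : ℕ} (L : Euc n × Euc m → ℝ) (q : Euc n) (u : Euc m) : Euc m :=
  gradient (fun u' => L (q, u')) u

open Set MeasureTheory intervalIntegral Function
open scoped ContDiff

section Calculus

variable {E : Type*} [NormedAddCommGroup E] [NormedSpace ℝ E]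

theorem hasDerivAt_add_smul (x dx : E) (ε : ℝ) : HasDerivAt (fun ε : ℝ => x + ε • dx) dx ε := by
  simpa using ((hasDerivAt_id ε).smul_const dx).const_add x

theorem hasDerivAt_intervalIntegral_of_continuous {F F' : ℝ → ℝ → E}
    (hF : Continuous (uncurry F)) (hF' : Continuous (uncurry F'))
    (hderiv : ∀ ε t, HasDerivAt (F · t) (F' ε t) ε) (a b x₀ : ℝ) :
    HasDerivAt (fun ε => ∫ t in a..b, F ε t) (∫ t in a..b, F' x₀ t) x₀ := by
  obtain ⟨C, hC⟩ := ((isCompact_closedBall x₀ 1).prod isCompact_uIcc).exists_bound_of_continuousOn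
    hF'.continuousOn
  exact (hasDerivAt_integral_of_dominated_loc_of_deriv_le (bound := fun _ => C)
    (Metric.ball_mem_nhds x₀ one_pos)
    (.of_forall fun ε => (hF.comp (Continuous.prodMk_right ε)).aestronglyMeasurable)
    ((hF.comp (Continuous.prodMk_right x₀)).intervalIntegrable _ _)
    (hF'.comp (Continuous.prodMk_right x₀)).aestronglyMeasurable
    (.of_forall fun t ht ε hε =>
      hC (ε, t) ⟨Metric.ball_subset_closedBall hε, uIoc_subset_uIcc ht⟩)
    intervalIntegrable_const
    (.of_forall fun t _ ε _ => hderiv ε t)).2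

variable {Z : Type*} [NormedAddCommGroup Z] [NormedSpace ℝ Z]

theorem hasDerivAt_intervalIntegral_comp_add_smul {L : Z → E} (hL : ContDiff ℝ 1 L)
    {z dz : ℝ → Z} (hz : Continuous z) (hdz : Continuous dz) (a b : ℝ) :
    HasDerivAt (fun ε : ℝ => ∫ t in a..b, L (z t + ε • dz t))
      (∫ t in a..b, fderiv ℝ L (z t) (dz t)) 0 := by
  have hline : Continuous fun x : ℝ × ℝ => z x.2 + x.1 • dz x.2 := by fun_prop
  simpa using hasDerivAt_intervalIntegral_of_continuous (F := fun ε t => L (z t + ε • dz t))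
    (F' := fun ε t => fderiv ℝ L (z t + ε • dz t) (dz t)) (hL.continuous.comp hline)
    (((hL.continuous_fderiv one_ne_zero).comp hline).clm_apply (hdz.comp continuous_snd))
    (fun ε t => (hL.differentiable one_ne_zero _).hasFDerivAt.comp_hasDerivAt ε
      (hasDerivAt_add_smul _ _ ε)) a b 0

end Calculus

section InnerProduct

variable {H : Type*} [NormedAddCommGroup H] [InnerProductSpace ℝ H]

theorem integral_inner_deriv_add_deriv_inner_eq_zero {p δ : ℝ → H} (hp : ContDiff ℝ 1 p)
    (hδ : ContDiff ℝ 1 δ) {a b : ℝ} (ha : δ a = 0) (hb : δ b = 0) :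
    ∫ t in a..b, (⟪p t, deriv δ t⟫ + ⟪deriv p t, δ t⟫) = 0 := by
  have hderiv : ∀ t ∈ uIcc a b,
      HasDerivAt (fun s => ⟪p s, δ s⟫) (⟪p t, deriv δ t⟫ + ⟪deriv p t, δ t⟫) t := fun t _ =>
    (hp.differentiable one_ne_zero t).hasDerivAt.inner ℝ
      (hδ.differentiable one_ne_zero t).hasDerivAt
  have hcont : Continuous fun t => ⟪p t, deriv δ t⟫ + ⟪deriv p t, δ t⟫ :=
    (hp.continuous.inner (hδ.continuous_deriv le_rfl)).add
      ((hp.continuous_deriv le_rfl).inner hδ.continuous)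
  rw [integral_eq_sub_of_hasDerivAt hderiv (hcont.intervalIntegrable _ _), ha, hb]
  simp

theorem eqOn_zero_of_forall_integral_mul_eq_zero {g : ℝ → ℝ} (hg : Continuous g) {a b : ℝ}
    (hab : a < b)
    (h : ∀ ψ : ℝ → ℝ, ContDiff ℝ ∞ ψ → HasCompactSupport ψ → tsupport ψ ⊆ Ioo a b →
      ∫ t in a..b, ψ t * g t = 0) :
    EqOn g 0 (Icc a b) := by
  have hae : ∀ᵐ t ∂volume, t ∈ Ioo a b → g t = 0 := by
    refine isOpen_Ioo.ae_eq_zero_of_integral_contDiff_smul_eq_zero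
      (hg.locallyIntegrable.locallyIntegrableOn _) fun ψ hψ hψc hψU => ?_
    rw [← h ψ hψ hψc hψU, integral_of_le hab.le,
      setIntegral_eq_integral_of_forall_compl_eq_zero fun t ht => ?_]
    · rfl
    · rw [image_eq_zero_of_notMem_tsupport fun h => ht (Ioo_subset_Ioc_self (hψU h)), zero_mul]
  have hIoo : EqOn g 0 (Ioo a b) :=
    Measure.eqOn_open_of_ae_eq ((ae_restrict_iff' measurableSet_Ioo).2 hae) isOpen_Ioo
      hg.continuousOn continuousOn_const
  simpa [closure_Ioo hab.ne] using hIoo.closure hg continuous_const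

theorem eqOn_zero_of_forall_integral_inner_eq_zero {G : ℝ → H} (hG : Continuous G) {a b : ℝ}
    (hab : a < b)
    (h : ∀ δ : ℝ → H, ContDiff ℝ 1 δ → δ a = 0 → δ b = 0 → ∫ t in a..b, ⟪δ t, G t⟫ = 0) :
    EqOn G 0 (Icc a b) := by
  intro s hs
  suffices EqOn (fun t => ⟪G s, G t⟫) 0 (Icc a b) by simpa using this hs
  refine eqOn_zero_of_forall_integral_mul_eq_zero (continuous_const.inner hG) hab
    fun ψ hψ _ hψU => ?_
  have hψ0 : ∀ t ∉ Ioo a b, ψ t = 0 := fun t ht =>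
    image_eq_zero_of_notMem_tsupport fun h => ht (hψU h)
  simpa [real_inner_smul_left] using
    h (fun t => ψ t • G s) ((hψ.of_le (by simp)).smul contDiff_const)
      (by simp [hψ0 a (by simp)]) (by simp [hψ0 b (by simp)])

end InnerProduct

section Lagrangian

variable {X H K : Type*} [NormedAddCommGroup X] [NormedSpace ℝ X] [NormedAddCommGroup H]
  [InnerProductSpace ℝ H] [NormedAddCommGroup K] [InnerProductSpace ℝ K]

/-- `z = (x, v, p, λ)`, where along a curve `x = (q, u)` and `v = q̇`. -/
def adjointLagrangian (f : X → H) (φ : X → K) (z : X × H × H × K) : ℝ :=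
  ⟪z.2.2.1, z.2.1 - f z.1⟫ - ⟪z.2.2.2, φ z.1⟫

theorem contDiff_adjointLagrangian {f : X → H} {φ : X → K} (hf : ContDiff ℝ 1 f)
    (hφ : ContDiff ℝ 1 φ) : ContDiff ℝ 1 (adjointLagrangian f φ) :=
  (contDiff_snd.snd.fst.inner ℝ (contDiff_snd.fst.sub (hf.comp contDiff_fst))).sub
    (contDiff_snd.snd.snd.inner ℝ (hφ.comp contDiff_fst))

theorem fderiv_adjointLagrangian_apply {f : X → H} {φ : X → K} {x : X}
    (hf : DifferentiableAt ℝ f x) (hφ : DifferentiableAt ℝ φ x) (v p : H) (l : K)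
    (dx : X) (dv dp : H) (dl : K) :
    fderiv ℝ (adjointLagrangian f φ) (x, v, p, l) (dx, dv, dp, dl) =
      ⟪p, dv - fderiv ℝ f x dx⟫ + ⟪dp, v - f x⟫ - (⟪l, fderiv ℝ φ x dx⟫ + ⟪dl, φ x⟫) := by
  have hL : DifferentiableAt ℝ (adjointLagrangian f φ) (x, v, p, l) :=
    (differentiableAt_snd.snd.fst.inner ℝ
      (differentiableAt_snd.fst.sub (hf.comp _ differentiableAt_fst))).sub
      (differentiableAt_snd.snd.snd.inner ℝ (hφ.comp _ differentiableAt_fst))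
  have hf' := hf.hasFDerivAt.comp_hasDerivAt_of_eq 0 (hasDerivAt_add_smul x dx 0) (by simp)
  have hφ' := hφ.hasFDerivAt.comp_hasDerivAt_of_eq 0 (hasDerivAt_add_smul x dx 0) (by simp)
  have hline : HasDerivAt
      (fun ε : ℝ => ⟪p + ε • dp, v + ε • dv - f (x + ε • dx)⟫ - ⟪l + ε • dl, φ (x + ε • dx)⟫)
      (⟪p, dv - fderiv ℝ f x dx⟫ + ⟪dp, v - f x⟫ - (⟪l, fderiv ℝ φ x dx⟫ + ⟪dl, φ x⟫)) 0 := by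
    have h := ((hasDerivAt_add_smul p dp 0).inner ℝ
      ((hasDerivAt_add_smul v dv 0).sub hf')).sub ((hasDerivAt_add_smul l dl 0).inner ℝ hφ')
    simp only [Pi.sub_apply, comp_apply, zero_smul, add_zero] at h
    exact h
  exact (hL.hasFDerivAt.comp_hasDerivAt_of_eq 0
    (hasDerivAt_add_smul (x, v, p, l) (dx, dv, dp, dl) 0) (by simp)).unique hline

variable {Y : Type*} [NormedAddCommGroup Y] [NormedSpace ℝ Y]

def adjointAction (f : H × Y → H) (φ : H × Y → K) (t₀ t₁ : ℝ) (q : ℝ → H) (u : ℝ → Y)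
    (p : ℝ → H) (lam : ℝ → K) : ℝ :=
  ∫ t in t₀..t₁, adjointLagrangian f φ ((q t, u t), deriv q t, p t, lam t)

end Lagrangian

section PartialJacobians

variable {n m k : ℕ} {F : Euc n × Euc m → Euc k}

theorem Dq_eq_fderiv_comp_inl {q : Euc n} {u : Euc m} (hF : DifferentiableAt ℝ F (q, u)) :
    Dq F q u = (fderiv ℝ F (q, u)).comp (.inl ℝ (Euc n) (Euc m)) :=
  (hF.hasFDerivAt.comp q (hasFDerivAt_prodMk_left q u)).fderiv

theorem Du_eq_fderiv_comp_inr {q : Euc n} {u : Euc m} (hF : DifferentiableAt ℝ F (q, u)) :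
    Du F q u = (fderiv ℝ F (q, u)).comp (.inr ℝ (Euc n) (Euc m)) :=
  (hF.hasFDerivAt.comp u (hasFDerivAt_prodMk_right q u)).fderiv

theorem fderiv_apply_prod_eq_Dq_add_Du {q : Euc n} {u : Euc m}
    (hF : DifferentiableAt ℝ F (q, u)) (v : Euc n) (w : Euc m) :
    fderiv ℝ F (q, u) (v, w) = Dq F q u v + Du F q u w := by
  rw [Dq_eq_fderiv_comp_inl hF, Du_eq_fderiv_comp_inr hF, ContinuousLinearMap.comp_apply,
    ContinuousLinearMap.comp_apply, ← map_add]
  simp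

theorem continuous_DqT_apply {α : Type*} [TopologicalSpace α] (hF : ContDiff ℝ 1 F)
    {q : α → Euc n} {u : α → Euc m} {r : α → Euc k} (hq : Continuous q) (hu : Continuous u)
    (hr : Continuous r) : Continuous fun a => DqT F (q a) (u a) (r a) := by
  have hDqT : (fun x : Euc n × Euc m => DqT F x.1 x.2) =
      fun x => ContinuousLinearMap.adjoint ((fderiv ℝ F x).comp (.inl ℝ (Euc n) (Euc m))) :=
    funext fun x => by rw [DqT, Dq_eq_fderiv_comp_inl (hF.differentiable one_ne_zero _)]
  have hcont : Continuous fun x : Euc n × Euc m => DqT F x.1 x.2 := hDqT ▸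
    ContinuousLinearMap.adjoint.isometry.continuous.comp
      ((hF.continuous_fderiv one_ne_zero).clm_comp continuous_const)
  exact (hcont.comp (hq.prodMk hu)).clm_apply hr

theorem continuous_DuT_apply {α : Type*} [TopologicalSpace α] (hF : ContDiff ℝ 1 F)
    {q : α → Euc n} {u : α → Euc m} {r : α → Euc k} (hq : Continuous q) (hu : Continuous u)
    (hr : Continuous r) : Continuous fun a => DuT F (q a) (u a) (r a) := by
  have hDuT : (fun x : Euc n × Euc m => DuT F x.1 x.2) =
      fun x => ContinuousLinearMap.adjoint ((fderiv ℝ F x).comp (.inr ℝ (Euc n) (Euc m))) :=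
    funext fun x => by rw [DuT, Du_eq_fderiv_comp_inr (hF.differentiable one_ne_zero _)]
  have hcont : Continuous fun x : Euc n × Euc m => DuT F x.1 x.2 := hDuT ▸
    ContinuousLinearMap.adjoint.isometry.continuous.comp
      ((hF.continuous_fderiv one_ne_zero).clm_comp continuous_const)
  exact (hcont.comp (hq.prodMk hu)).clm_apply hr

end PartialJacobians

section FirstVariation

variable {n m k : ℕ} {f : Euc n × Euc m → Euc n} {φ : Euc n × Euc m → Euc k}

theorem fderiv_adjointLagrangian_apply_eq_DqT_DuT {q : Euc n} {u : Euc m}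
    (hf : DifferentiableAt ℝ f (q, u)) (hφ : DifferentiableAt ℝ φ (q, u)) (v p : Euc n)
    (l : Euc k) (dq : Euc n) (du : Euc m) (dv dp : Euc n) (dl : Euc k) :
    fderiv ℝ (adjointLagrangian f φ) ((q, u), v, p, l) ((dq, du), dv, dp, dl) =
      ⟪dp, v - f (q, u)⟫ - ⟪dl, φ (q, u)⟫ - ⟪dq, DqT f q u p + DqT φ q u l⟫
        - ⟪du, DuT f q u p + DuT φ q u l⟫ + ⟪p, dv⟫ := by
  rw [fderiv_adjointLagrangian_apply hf hφ, fderiv_apply_prod_eq_Dq_add_Du hf,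
    fderiv_apply_prod_eq_Dq_add_Du hφ]
  simp only [DqT, DuT, inner_add_right, inner_sub_right, ContinuousLinearMap.adjoint_inner_right,
    real_inner_comm p, real_inner_comm l]
  ring

theorem hasDerivAt_adjointAction_add_smul (hf : ContDiff ℝ 1 f) (hφ : ContDiff ℝ 1 φ)
    {t₀ t₁ : ℝ} {q p δq δp : ℝ → Euc n} {u δu : ℝ → Euc m} {lam δlam : ℝ → Euc k}
    (hq : ContDiff ℝ 1 q) (hu : Continuous u) (hp : ContDiff ℝ 1 p) (hlam : Continuous lam)
    (hδq : ContDiff ℝ 1 δq) (hδu : Continuous δu) (hδp : Continuous δp)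
    (hδlam : Continuous δlam) (h₀ : δq t₀ = 0) (h₁ : δq t₁ = 0) :
    HasDerivAt
      (fun ε : ℝ => adjointAction f φ t₀ t₁ (q + ε • δq) (u + ε • δu) (p + ε • δp)
        (lam + ε • δlam))
      (∫ t in t₀..t₁, (⟪δp t, deriv q t - f (q t, u t)⟫ - ⟪δlam t, φ (q t, u t)⟫
        - ⟪δq t, deriv p t + (DqT f (q t) (u t) (p t) + DqT φ (q t) (u t) (lam t))⟫
        - ⟪δu t, DuT f (q t) (u t) (p t) + DuT φ (q t) (u t) (lam t)⟫)) 0 := by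
  set z : ℝ → (Euc n × Euc m) × Euc n × Euc n × Euc k :=
    fun t => ((q t, u t), deriv q t, p t, lam t)
  set dz : ℝ → (Euc n × Euc m) × Euc n × Euc n × Euc k :=
    fun t => ((δq t, δu t), deriv δq t, δp t, δlam t)
  have hz : Continuous z := (hq.continuous.prodMk hu).prodMk
    ((hq.continuous_deriv le_rfl).prodMk (hp.continuous.prodMk hlam))
  have hdz : Continuous dz := (hδq.continuous.prodMk hδu).prodMk
    ((hδq.continuous_deriv le_rfl).prodMk (hδp.prodMk hδlam))
  have hderiv (ε t : ℝ) : deriv (q + ε • δq) t = deriv q t + ε • deriv δq t :=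
    ((hq.differentiable one_ne_zero t).hasDerivAt.add
      ((hδq.differentiable one_ne_zero t).hasDerivAt.const_smul ε)).deriv
  have hline : (fun ε : ℝ =>
      adjointAction f φ t₀ t₁ (q + ε • δq) (u + ε • δu) (p + ε • δp) (lam + ε • δlam)) =
      fun ε => ∫ t in t₀..t₁, adjointLagrangian f φ (z t + ε • dz t) :=
    funext fun ε => integral_congr fun t _ => by rw [hderiv]; rfl
  have hL := contDiff_adjointLagrangian hf hφ
  have hint : IntervalIntegrable (fun t => fderiv ℝ (adjointLagrangian f φ) (z t) (dz t))
      volume t₀ t₁ :=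
    (((hL.continuous_fderiv one_ne_zero).comp hz).clm_apply hdz).intervalIntegrable _ _
  have hint' : IntervalIntegrable (fun t => ⟪p t, deriv δq t⟫ + ⟪deriv p t, δq t⟫)
      volume t₀ t₁ :=
    ((hp.continuous.inner (hδq.continuous_deriv le_rfl)).add
      ((hp.continuous_deriv le_rfl).inner hδq.continuous)).intervalIntegrable _ _
  rw [hline]
  refine (hasDerivAt_intervalIntegral_comp_add_smul hL hz hdz t₀ t₁).congr_deriv ?_
  rw [← sub_zero (∫ t in t₀..t₁, _), ← integral_inner_deriv_add_deriv_inner_eq_zero hp hδq h₀ h₁,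
    ← intervalIntegral.integral_sub hint hint']
  refine integral_congr fun t _ => ?_
  simp only [z, dz, fderiv_adjointLagrangian_apply_eq_DqT_DuT (hf.differentiable one_ne_zero _)
    (hφ.differentiable one_ne_zero _), inner_add_right, real_inner_comm (deriv p t)]
  ring

end FirstVariation

section Stationarity

variable {H₁ H₂ H₃ H₄ : Type*} [NormedAddCommGroup H₁] [InnerProductSpace ℝ H₁]
  [NormedAddCommGroup H₂] [InnerProductSpace ℝ H₂] [NormedAddCommGroup H₃]
  [InnerProductSpace ℝ H₃] [NormedAddCommGroup H₄] [InnerProductSpace ℝ H₄]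

theorem forall_integral_variation_eq_zero_iff {t₀ t₁ : ℝ} (ht : t₀ < t₁) {Rq : ℝ → H₁}
    {Ru : ℝ → H₂} {Rp : ℝ → H₃} {Rl : ℝ → H₄} (hRp : Continuous Rp) (hRq : Continuous Rq)
    (hRl : Continuous Rl) (hRu : Continuous Ru) :
    (∀ (δq : ℝ → H₁) (δu : ℝ → H₂) (δp : ℝ → H₃) (δlam : ℝ → H₄),
        ContDiff ℝ 1 δq → ContDiff ℝ 1 δu → ContDiff ℝ 1 δp → ContDiff ℝ 1 δlam →
        δq t₀ = 0 → δq t₁ = 0 →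
        ∫ t in t₀..t₁, (⟪δp t, Rp t⟫ - ⟪δlam t, Rl t⟫ - ⟪δq t, Rq t⟫ - ⟪δu t, Ru t⟫) = 0) ↔
      ∀ t ∈ Icc t₀ t₁, Rp t = 0 ∧ Rq t = 0 ∧ Rl t = 0 ∧ Ru t = 0 := by
  constructor
  · intro H
    have h_state := eqOn_zero_of_forall_integral_inner_eq_zero hRp ht fun δ hδ _ _ => by
      simpa using H 0 0 δ 0 contDiff_const contDiff_const hδ contDiff_const rfl rfl
    have h_costate := eqOn_zero_of_forall_integral_inner_eq_zero hRq ht fun δ hδ h₀ h₁ => by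
      simpa using H δ 0 0 0 hδ contDiff_const contDiff_const contDiff_const h₀ h₁
    have h_constraint := eqOn_zero_of_forall_integral_inner_eq_zero hRl ht fun δ hδ _ _ => by
      simpa using H 0 0 0 δ contDiff_const contDiff_const contDiff_const hδ rfl rfl
    have h_stationary := eqOn_zero_of_forall_integral_inner_eq_zero hRu ht fun δ hδ _ _ => by
      simpa using H 0 δ 0 0 contDiff_const hδ contDiff_const contDiff_const rfl rfl
    exact fun t ht => ⟨h_state ht, h_costate ht, h_constraint ht, h_stationary ht⟩
  · rintro H δq δu δp δlam - - - - - -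
    refine (integral_congr fun t ht' => ?_).trans integral_zero
    obtain ⟨h_state, h_costate, h_constraint, h_stationary⟩ := H t (uIcc_of_le ht.le ▸ ht')
    simp [h_state, h_costate, h_constraint, h_stationary]

end Stationarity

/-- the Gateaux derivative of the adjoint DAE action
`S = ∫ (⟨p, q̇ − f(q,u)⟩ − ⟨λ, φ(q,u)⟩) dt` vanishes for all variations
`(δq, δu, δp, δλ)` with `δq(t₀) = δq(t₁) = 0` iff `(q,u,p,λ)` solves the
adjoint DAE system on `[t₀, t₁]`. -/
theorem adjoint_DAE_variational_principle {n m k : ℕ}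
    (f : Euc n × Euc m → Euc n) (φ : Euc n × Euc m → Euc k)
    (hf : ContDiff ℝ 1 f) (hφ : ContDiff ℝ 1 φ)
    (t₀ t₁ : ℝ) (ht : t₀ < t₁)
    (q : ℝ → Euc n) (u : ℝ → Euc m) (p : ℝ → Euc n) (lam : ℝ → Euc k)
    (hq : ContDiff ℝ 1 q) (hu : ContDiff ℝ 1 u) (hp : ContDiff ℝ 1 p)
    (hlam : ContDiff ℝ 1 lam) :
    (∀ (δq : ℝ → Euc n) (δu : ℝ → Euc m) (δp : ℝ → Euc n) (δlam : ℝ → Euc k),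
        ContDiff ℝ 1 δq → ContDiff ℝ 1 δu → ContDiff ℝ 1 δp → ContDiff ℝ 1 δlam →
        δq t₀ = 0 → δq t₁ = 0 →
        deriv (fun ε : ℝ =>
          ∫ t in t₀..t₁,
            (⟪p t + ε • δp t,
                deriv (fun s => q s + ε • δq s) t - f (q t + ε • δq t, u t + ε • δu t)⟫
              - ⟪lam t + ε • δlam t, φ (q t + ε • δq t, u t + ε • δu t)⟫)) 0 = 0)
    ↔ (∀ t ∈ Set.Icc t₀ t₁,
        deriv q t = f (q t, u t) ∧
        deriv p t = -(DqT f (q t) (u t) (p t)) - DqT φ (q t) (u t) (lam t) ∧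
        φ (q t, u t) = 0 ∧
        DuT f (q t) (u t) (p t) + DuT φ (q t) (u t) (lam t) = 0) := by
  have cq := hq.continuous
  have cu := hu.continuous
  have cp := hp.continuous
  have clam := hlam.continuous
  have hvariation (δq : ℝ → Euc n) (δu : ℝ → Euc m) (δp : ℝ → Euc n) (δlam : ℝ → Euc k)
      (hδq : ContDiff ℝ 1 δq) (hδu : ContDiff ℝ 1 δu) (hδp : ContDiff ℝ 1 δp)
      (hδlam : ContDiff ℝ 1 δlam) (h₀ : δq t₀ = 0) (h₁ : δq t₁ = 0) :=
    (hasDerivAt_adjointAction_add_smul hf hφ hq cu hp clam hδq hδu.continuous hδp.continuous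
      hδlam.continuous h₀ h₁).deriv
  have hresiduals := forall_integral_variation_eq_zero_iff ht
    (Rp := fun t => deriv q t - f (q t, u t))
    (Rq := fun t => deriv p t + (DqT f (q t) (u t) (p t) + DqT φ (q t) (u t) (lam t)))
    (Rl := fun t => φ (q t, u t))
    (Ru := fun t => DuT f (q t) (u t) (p t) + DuT φ (q t) (u t) (lam t))
    ((hq.continuous_deriv le_rfl).sub (hf.continuous.comp (cq.prodMk cu)))
    ((hp.continuous_deriv le_rfl).add
      ((continuous_DqT_apply hf cq cu cp).add (continuous_DqT_apply hφ cq cu clam)))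
    (hφ.continuous.comp (cq.prodMk cu))
    ((continuous_DuT_apply hf cq cu cp).add (continuous_DuT_apply hφ cq cu clam))
  -- `adjointAction` unfolds to the integral in the statement, so `hvariation` applies to it.
  refine Iff.trans ⟨fun H δq δu δp δlam hδq hδu hδp hδlam h₀ h₁ => ?_,
    fun H δq δu δp δlam hδq hδu hδp hδlam h₀ h₁ => ?_⟩ (hresiduals.trans ?_)
  · exact (hvariation δq δu δp δlam hδq hδu hδp hδlam h₀ h₁).symm.trans
      (H δq δu δp δlam hδq hδu hδp hδlam h₀ h₁)
  · exact (hvariation δq δu δp δlam hδq hδu hδp hδlam h₀ h₁).trans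
      (H δq δu δp δlam hδq hδu hδp hδlam h₀ h₁)
  · refine forall₂_congr fun t _ => ?_
    rw [sub_eq_zero, ← neg_add', eq_neg_iff_add_eq_zero]

end
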